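/- The shift lemma for the iterated-environment construction: define A : ℕ → ℕ → υ by A x = R zero (λ a b. Cons (step a b) a) (x+1), where R is the primitive recursor on ℕ → υ, zero is a default function, Cons prepends an element to a function ℕ → υ, and step : (ℕ → υ) → ℕ → υ is arbitrary. Then for all naturals i and j, A (i+j) j = A i 0. -/
import Mathlib

/-- `Cons v f` prepends `v` to the sequence `f : ℕ → υ`. -/
def Cons {υ : Type*} (v : υ) (f : ℕ → υ) : ℕ → υ
  | 0 => v
  | k + 1 => f k

/-- The primitive recursor on `ℕ → υ`: `R z g 0 = z`, `R z g (n+1) = g (R z g n) n`. -/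
def R {υ : Type*} (z : ℕ → υ) (g : (ℕ → υ) → ℕ → (ℕ → υ)) : ℕ → (ℕ → υ)
  | 0 => z
  | n + 1 => g (R z g n) n

/-- The constant default function. -/
def zero {υ : Type*} [Inhabited υ] : ℕ → υ := fun _ => default

/-- The iterated-environment construction `A x = R zero (fun a b => Cons (step a b) a) (x+1)`. -/
def A {υ : Type*} [Inhabited υ] (step : (ℕ → υ) → ℕ → υ) (x : ℕ) : ℕ → υ :=
  R zero (fun a b => Cons (step a b) a) (x + 1)

/-- Shift lemma: `A (i+j) j = A i 0`. -/
theorem shift_lemma {υ : Type*} [Inhabited υ] (step : (ℕ → υ) → ℕ → υ) :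
    ∀ i j : ℕ, A step (i + j) j = A step i 0 := by
  intro i j
  induction j with
  | zero => rfl
  | succ n ih =>
    rw [← ih]
    show R zero _ (i + (n + 1) + 1) (n + 1) = _
    rw [show i + (n + 1) + 1 = (i + n + 1) + 1 from by ring]
    simp [R, Cons]
    rfl
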